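/- Let K be a finite field with |K| = q, let W be a finite-dimensional K-vector space, and let (U,V) be a nontrivial solution of the isometry equation with tuples of length m = q+1 such that max_i dim_K V_i = max_i dim_K U_i = n > 1. Then: (a) dim_K V_i ≥ n−1 and dim_K U_j ≥ n−1 for all i, j ∈ {1,…,m}; and (b) for all i, j ∈ {1,…,m}, if dim_K U_j > dim_K V_i then V_i is strictly contained in U_j. -/

import Mathlib

open Finset
open scoped Classical

/-- The pair of tuples `(U, V)` is a solution of the isometry equation
`∑ i, (1/|V i|) • 1_{V i} = ∑ i, (1/|U i|) • 1_{U i}` as real-valued functions on `W`. -/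
def IsometrySolution {K W : Type*} [Field K] [AddCommGroup W] [Module K W]
    {m : ℕ} (U V : Fin m → Submodule K W) : Prop :=
  ∀ w : W,
    ∑ i, ((Nat.card ↥(V i) : ℝ))⁻¹ * (if w ∈ V i then 1 else 0) =
    ∑ i, ((Nat.card ↥(U i) : ℝ))⁻¹ * (if w ∈ U i then 1 else 0)

/-- Two tuples of subspaces are equivalent if one is a permutation of the other. -/
def TuplesEquiv {K W : Type*} [Field K] [AddCommGroup W] [Module K W]
    {m : ℕ} (U V : Fin m → Submodule K W) : Prop :=
  ∃ π : Equiv.Perm (Fin m), ∀ i, V i = U (π i)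

/-!
Summing the isometry equation over the points of a hyperplane `ker φ` shows that every hyperplane
contains as many of the `V i` as of the `U j`; dually, the annihilators of the `V i` and of the
`U j` cover every linear form equally often. Over a field with `q` elements, a subspace `A` not
inside a hyperplane `ker f` has `(q - 1) q ^ (dim A - 1)` points off it, and a subspace of smaller
dimension has at most a `q`-th as many, with equality only in codimension one. Hence `q` subspaces
not containing `A` never cover it, and when `q + 1` of them do, each meets `A` in a hyperplane of
`A`. The first fact cancels common members of two such families, so a nontrivial solution has
none; the second, applied to the annihilator of a space of least dimension `d`, shows that every
space of the other family has dimension at most `d + 1`, which gives both claims.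
-/

open Module LinearMap

namespace Submodule

section Hyperplane

variable {K Φ ι : Type*} [Field K] [AddCommGroup Φ] [Module K Φ]

theorem finrank_inf_ker_add_one {X : Submodule K Φ} [FiniteDimensional K X] {f : Dual K Φ}
    (h : ¬X ≤ ker f) : finrank K ↥(X ⊓ ker f) + 1 = finrank K X := by
  have hf : f.domRestrict X ≠ 0 := fun h0 =>
    h fun x hx => by simpa using LinearMap.congr_fun h0 ⟨x, hx⟩
  rw [← Dual.finrank_ker_add_one_of_ne_zero hf, ker_domRestrict,
    ← (comapSubtypeEquivOfLe (inf_le_left : X ⊓ ker f ≤ X)).finrank_eq, comap_inf,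
    comap_subtype_self, top_inf_eq]

theorem mem_dualAnnihilator_iff_le_ker {X : Submodule K Φ} {φ : Dual K Φ} :
    φ ∈ X.dualAnnihilator ↔ X ≤ ker φ := by
  simp [mem_dualAnnihilator, SetLike.le_def]

theorem exists_dual_le_ker_of_notMem {p : Submodule K Φ} {x : Φ} (hx : x ∉ p) :
    ∃ f : Dual K Φ, f x ≠ 0 ∧ p ≤ ker f := by
  obtain ⟨f, hfx, hf⟩ := exists_dual_map_eq_bot_of_notMem hx inferInstance
  exact ⟨f, hfx, le_ker_iff_map.mpr hf⟩

/-- A hyperplane through `T j₀` that misses a point of `A` lets one drop `T j₀` from the cover,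
at the price of covering only the points of `A` off that hyperplane. -/
theorem exists_dual_forall_mem_exists_mem_erase {A : Submodule K Φ} {T : ι → Submodule K Φ}
    {s : Finset ι} (hcov : ∀ x ∈ A, ∃ j ∈ s, x ∈ T j) {j₀ : ι} (hj₀ : j₀ ∈ s)
    (hA : ¬A ≤ T j₀) :
    ∃ f : Dual K Φ, ¬A ≤ ker f ∧ ∀ x ∈ A, f x ≠ 0 → ∃ j ∈ s.erase j₀, x ∈ T j ⊓ A := by
  obtain ⟨x, hxA, hx⟩ := SetLike.not_le_iff_exists.mp hA
  obtain ⟨f, hfx, hf⟩ := exists_dual_le_ker_of_notMem hx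
  refine ⟨f, fun h => hfx (h hxA), fun y hyA hy => ?_⟩
  obtain ⟨j, hj, hyj⟩ := hcov y hyA
  exact ⟨j, mem_erase.mpr ⟨by rintro rfl; exact hy (hf hyj), hj⟩, hyj, hyA⟩

end Hyperplane

section Covering

variable {K Φ ι : Type*} [Field K] [AddCommGroup Φ] [Module K Φ] [Fintype Φ]
variable {f : Dual K Φ} {A X : Submodule K Φ} {T : ι → Submodule K Φ} {s : Finset ι}

noncomputable def cardOffKer (f : Dual K Φ) (X : Submodule K Φ) : ℕ := #{x | x ∈ X ∧ f x ≠ 0}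

theorem cardOffKer_le_sum (hcov : ∀ x ∈ A, f x ≠ 0 → ∃ j ∈ s, x ∈ T j) :
    cardOffKer f A ≤ ∑ j ∈ s, cardOffKer f (T j) := by
  refine (card_le_card fun x hx => ?_).trans card_biUnion_le
  obtain ⟨hxA, hfx⟩ := (mem_filter.mp hx).2
  obtain ⟨j, hj, hxj⟩ := hcov x hxA hfx
  exact mem_biUnion.mpr ⟨j, hj, mem_filter.mpr ⟨mem_univ x, hxj, hfx⟩⟩

variable [Fintype K]

local notation "q" => Fintype.card K

theorem card_filter_mem (X : Submodule K Φ) : #{x | x ∈ X} = q ^ finrank K X := by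
  rw [← Fintype.card_subtype]
  exact card_eq_pow_finrank

theorem cardOffKer_add_card_inf_ker (f : Dual K Φ) (X : Submodule K Φ) :
    cardOffKer f X + q ^ finrank K ↥(X ⊓ ker f) = q ^ finrank K X := by
  rw [← card_filter_mem, ← card_filter_mem, cardOffKer, add_comm,
    ← card_filter_add_card_filter_not (fun x => f x = 0) (s := {x | x ∈ X}), filter_filter,
    filter_filter]
  simp only [mem_inf, LinearMap.mem_ker]

theorem card_mul_cardOffKer (h : ¬X ≤ ker f) :
    q * cardOffKer f X = (q - 1) * q ^ finrank K X := by
  have hsum := cardOffKer_add_card_inf_ker f X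
  rw [← finrank_inf_ker_add_one h, pow_succ] at hsum ⊢
  have : cardOffKer f X = q ^ finrank K ↥(X ⊓ ker f) * (q - 1) := by
    rw [Nat.mul_sub_one]; omega
  rw [this]; ring

theorem cardOffKer_eq_zero (h : X ≤ ker f) : cardOffKer f X = 0 := by
  have := cardOffKer_add_card_inf_ker f X
  rwa [inf_eq_left.mpr h, add_eq_right] at this

theorem cardOffKer_pos (hA : ¬A ≤ ker f) : 0 < cardOffKer f A := by
  have hpos : 0 < (q - 1) * q ^ finrank K A :=
    Nat.mul_pos (Nat.sub_pos_of_lt Fintype.one_lt_card) (Nat.pow_pos Fintype.card_pos)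
  rw [← card_mul_cardOffKer hA] at hpos
  exact Nat.pos_of_mul_pos_left hpos

theorem card_mul_cardOffKer_le (hA : ¬A ≤ ker f) (hX : finrank K X < finrank K A) :
    q * cardOffKer f X ≤ cardOffKer f A := by
  by_cases hXf : X ≤ ker f
  · simp [cardOffKer_eq_zero hXf]
  refine Nat.le_of_mul_le_mul_left ?_ (Fintype.card_pos (α := K))
  calc q * (q * cardOffKer f X) = (q - 1) * q ^ (finrank K X + 1) := by
        rw [card_mul_cardOffKer hXf, pow_succ]; ring
    _ ≤ (q - 1) * q ^ finrank K A :=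
        Nat.mul_le_mul_left _ (Nat.pow_le_pow_right Fintype.card_pos hX)
    _ = q * cardOffKer f A := (card_mul_cardOffKer hA).symm

theorem finrank_add_one_eq_of_card_mul_cardOffKer_eq (hA : ¬A ≤ ker f)
    (h : q * cardOffKer f X = cardOffKer f A) : finrank K X + 1 = finrank K A := by
  have hXf : ¬X ≤ ker f := fun hXf => by
    rw [cardOffKer_eq_zero hXf, mul_zero] at h
    exact (cardOffKer_pos hA).ne h
  have : (q - 1) * q ^ (finrank K X + 1) = (q - 1) * q ^ finrank K A := by
    rw [← card_mul_cardOffKer hA, ← h, card_mul_cardOffKer hXf, pow_succ]; ring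
  exact Nat.pow_right_injective Fintype.one_lt_card
    (Nat.eq_of_mul_eq_mul_left (Nat.sub_pos_of_lt Fintype.one_lt_card) this)

theorem card_mul_cardOffKer_le_sum (hcov : ∀ x ∈ A, f x ≠ 0 → ∃ j ∈ s, x ∈ T j) :
    q * cardOffKer f A ≤ ∑ j ∈ s, q * cardOffKer f (T j) := by
  rw [← mul_sum]
  exact Nat.mul_le_mul_left _ (cardOffKer_le_sum hcov)

theorem le_card_of_forall_mem_exists (hA : ¬A ≤ ker f)
    (hT : ∀ j ∈ s, finrank K (T j) < finrank K A)
    (hcov : ∀ x ∈ A, f x ≠ 0 → ∃ j ∈ s, x ∈ T j) : q ≤ #s := by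
  refine Nat.le_of_mul_le_mul_right ?_ (cardOffKer_pos hA)
  calc q * cardOffKer f A ≤ ∑ j ∈ s, q * cardOffKer f (T j) := card_mul_cardOffKer_le_sum hcov
    _ ≤ ∑ _j ∈ s, cardOffKer f A := sum_le_sum fun j hj => card_mul_cardOffKer_le hA (hT j hj)
    _ = #s * cardOffKer f A := by rw [sum_const, smul_eq_mul]

theorem finrank_add_one_eq_of_forall_mem_exists (hs : #s ≤ q) (hA : ¬A ≤ ker f)
    (hT : ∀ j ∈ s, finrank K (T j) < finrank K A)
    (hcov : ∀ x ∈ A, f x ≠ 0 → ∃ j ∈ s, x ∈ T j) :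
    ∀ j ∈ s, finrank K (T j) + 1 = finrank K A := by
  have hle : ∀ j ∈ s, q * cardOffKer f (T j) ≤ cardOffKer f A := fun j hj =>
    card_mul_cardOffKer_le hA (hT j hj)
  have hsum : ∑ j ∈ s, q * cardOffKer f (T j) = ∑ _j ∈ s, cardOffKer f A := by
    refine le_antisymm (sum_le_sum hle) ?_
    calc ∑ _j ∈ s, cardOffKer f A = #s * cardOffKer f A := by rw [sum_const, smul_eq_mul]
      _ ≤ q * cardOffKer f A := Nat.mul_le_mul_right _ hs
      _ ≤ ∑ j ∈ s, q * cardOffKer f (T j) := card_mul_cardOffKer_le_sum hcov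
  exact fun j hj => finrank_add_one_eq_of_card_mul_cardOffKer_eq hA
    ((sum_eq_sum_iff_of_le hle).mp hsum j hj)

theorem exists_mem_forall_notMem (hs : #s ≤ q) (hT : ∀ j ∈ s, ¬A ≤ T j) :
    ∃ x ∈ A, ∀ j ∈ s, x ∉ T j := by
  by_contra! hcov
  obtain ⟨j₀, hj₀, -⟩ := hcov 0 A.zero_mem
  obtain ⟨f, hf, hcov'⟩ := exists_dual_forall_mem_exists_mem_erase hcov hj₀ (hT j₀ hj₀)
  have := le_card_of_forall_mem_exists hf
    (fun j hj => finrank_lt_finrank_of_lt (inf_lt_right.mpr (hT j (mem_of_mem_erase hj)))) hcov'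
  rw [card_erase_of_mem hj₀] at this
  have := Fintype.card_pos (α := K)
  omega

theorem finrank_inf_add_one_eq [Fintype ι] (hι : Fintype.card ι = q + 1) (hT : ∀ j, ¬A ≤ T j)
    (hcov : ∀ x ∈ A, ∃ j, x ∈ T j) (j : ι) : finrank K ↥(T j ⊓ A) + 1 = finrank K A := by
  have := Fintype.card_pos (α := K)
  obtain ⟨j₀, hj₀⟩ := Fintype.exists_ne_of_one_lt_card (by omega) j
  obtain ⟨f, hf, hcov'⟩ := exists_dual_forall_mem_exists_mem_erase (s := univ)
    (by simpa using hcov) (mem_univ j₀) (hT j₀)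
  refine finrank_add_one_eq_of_forall_mem_exists ?_ hf
    (fun j _ => finrank_lt_finrank_of_lt (inf_lt_right.mpr (hT j))) hcov' j
    (mem_erase.mpr ⟨hj₀.symm, mem_univ j⟩)
  rw [card_erase_of_mem (mem_univ _), card_univ, hι, Nat.add_sub_cancel]

end Covering

section Duality

variable {K W ι : Type*} [Field K] [Fintype K] [AddCommGroup W] [Module K W]
  [FiniteDimensional K W]

local notation "q" => Fintype.card K

theorem exists_le_ker_forall_not_le (X : Submodule K W) {s : Finset (Submodule K W)}
    (hs : #s ≤ q) (hT : ∀ T ∈ s, ¬T ≤ X) : ∃ φ : Dual K W, X ≤ ker φ ∧ ∀ T ∈ s, ¬T ≤ ker φ := by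
  have : Finite (Dual K W) := Module.finite_of_finite K
  have := Fintype.ofFinite (Dual K W)
  obtain ⟨φ, hφX, hφT⟩ := exists_mem_forall_notMem (A := X.dualAnnihilator)
    (T := dualAnnihilator) hs
    (fun T hT' => by rw [Subspace.dualAnnihilator_le_dualAnnihilator_iff]; exact hT T hT')
  exact ⟨φ, mem_dualAnnihilator_iff_le_ker.mp hφX,
    fun T hT' h => hφT T hT' (mem_dualAnnihilator_iff_le_ker.mpr h)⟩

theorem finrank_sup_eq_finrank_add_one [Fintype ι] (hι : Fintype.card ι = q + 1)
    {X : Submodule K W} {U : ι → Submodule K W} (hU : ∀ j, ¬U j ≤ X)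
    (hcov : ∀ φ : Dual K W, X ≤ ker φ → ∃ j, U j ≤ ker φ) (j : ι) :
    finrank K ↥(U j ⊔ X) = finrank K X + 1 := by
  have : Finite (Dual K W) := Module.finite_of_finite K
  have := Fintype.ofFinite (Dual K W)
  have h := finrank_inf_add_one_eq (A := X.dualAnnihilator)
    (T := fun j => (U j).dualAnnihilator) hι
    (fun j => by rw [Subspace.dualAnnihilator_le_dualAnnihilator_iff]; exact hU j)
    (fun φ hφ => by
      simpa only [mem_dualAnnihilator_iff_le_ker] using
        hcov φ (mem_dualAnnihilator_iff_le_ker.mp hφ)) j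
  rw [← dualAnnihilator_sup_eq] at h
  have h₁ := Subspace.finrank_add_finrank_dualAnnihilator_eq (U j ⊔ X)
  have h₂ := Subspace.finrank_add_finrank_dualAnnihilator_eq X
  omega

theorem mem_of_forall_countP_le_ker_eq {s t : Multiset (Submodule K W)}
    (h : ∀ φ : Dual K W, s.countP (· ≤ ker φ) = t.countP (· ≤ ker φ)) (ht : t.card ≤ q)
    {X : Submodule K W} (hX : X ∈ s) (hmin : ∀ T ∈ t, finrank K X ≤ finrank K T) : X ∈ t := by
  by_contra hXt
  have hT : ∀ T ∈ t.toFinset, ¬T ≤ X := fun T hT hTX => by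
    rw [Multiset.mem_toFinset] at hT
    exact hXt (eq_of_le_of_finrank_le hTX (hmin T hT) ▸ hT)
  obtain ⟨φ, hXφ, hφ⟩ :=
    exists_le_ker_forall_not_le X ((Multiset.toFinset_card_le t).trans ht) hT
  obtain ⟨T, hT, hTφ⟩ := Multiset.countP_pos.mp (h φ ▸ Multiset.countP_pos.mpr ⟨X, hX, hXφ⟩)
  exact hφ T (Multiset.mem_toFinset.mpr hT) hTφ

theorem eq_of_forall_countP_le_ker_eq (s t : Multiset (Submodule K W)) (hs : s.card ≤ q)
    (h : ∀ φ : Dual K W, s.countP (· ≤ ker φ) = t.countP (· ≤ ker φ)) : s = t := by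
  induction s using Multiset.strongInductionOn generalizing t with
  | ih s ih =>
  have hcard : s.card = t.card := by simpa using h 0
  rcases s.empty_or_exists_mem with rfl | ⟨Y, hY⟩
  · exact (Multiset.card_eq_zero.mp hcard.symm).symm
  obtain ⟨X, hX, hmin⟩ := (s + t).toFinset.exists_min_image (finrank K ·) ⟨Y, by simp [hY]⟩
  have hXst : X ∈ s ∧ X ∈ t := by
    rcases Multiset.mem_add.mp (Multiset.mem_toFinset.mp hX) with hXs | hXt
    · exact ⟨hXs, mem_of_forall_countP_le_ker_eq h (hcard ▸ hs) hXs
        fun T hT => hmin T (by simp [hT])⟩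
    · exact ⟨mem_of_forall_countP_le_ker_eq (fun φ => (h φ).symm) hs hXt
        fun T hT => hmin T (by simp [hT]), hXt⟩
  rw [← Multiset.cons_erase hXst.1, ← Multiset.cons_erase hXst.2,
    ih (s.erase X) (Multiset.erase_lt.mpr hXst.1) (t.erase X) (Multiset.card_erase_le.trans hs)
      fun φ => ?_]
  have := h φ
  rw [← Multiset.cons_erase hXst.1, ← Multiset.cons_erase hXst.2, Multiset.countP_cons,
    Multiset.countP_cons] at this
  omega

end Duality

end Submodule

open Submodule

theorem tuplesEquiv_of_map_eq {K W : Type*} [Field K] [AddCommGroup W] [Module K W] {m : ℕ}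
    {U V : Fin m → Submodule K W} (h : univ.val.map V = univ.val.map U) : TuplesEquiv U V := by
  have hfib (Y : Submodule K W) : Fintype.card {i // V i = Y} = Fintype.card {i // U i = Y} := by
    have := congrArg (Multiset.count Y) h
    rw [Multiset.count_map, Multiset.count_map] at this
    simp only [Fintype.card_subtype, card_def, filter_val]
    simpa only [eq_comm] using this
  exact ⟨Equiv.ofFiberEquiv fun Y => Fintype.equivOfCardEq (hfib Y),
    fun i => (Equiv.ofFiberEquiv_map _ i).symm⟩

namespace IsometrySolution

variable {K W : Type*} [Field K] [AddCommGroup W] [Module K W]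

theorem symm {m : ℕ} {U V : Fin m → Submodule K W} (h : IsometrySolution U V) :
    IsometrySolution V U :=
  fun w => (h w).symm

variable [Fintype K] [Fintype W]

local notation "q" => Fintype.card K

theorem sum_mem_ker_inv_card_mul_indicator (X : Submodule K W) (φ : Dual K W) :
    ∑ w with w ∈ ker φ, ((Nat.card X : ℝ))⁻¹ * (if w ∈ X then 1 else 0) =
      if X ≤ ker φ then 1 else (q : ℝ)⁻¹ := by
  rw [← mul_sum, sum_boole, filter_filter]
  simp_rw [and_comm, ← Submodule.mem_inf, card_filter_mem]
  rw [natCard_eq_pow_finrank (K := K), Nat.card_eq_fintype_card]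
  split_ifs with hX
  · rw [inf_eq_left.mpr hX]
    field_simp
  · rw [← finrank_inf_ker_add_one hX, pow_succ]
    push_cast
    field_simp

theorem countP_map_le_ker_eq {m : ℕ} {U V : Fin m → Submodule K W} (h : IsometrySolution U V)
    (φ : Dual K W) :
    (univ.val.map V).countP (· ≤ ker φ) = (univ.val.map U).countP (· ≤ ker φ) := by
  have key (Y : Fin m → Submodule K W) :
      ∑ w with w ∈ ker φ, ∑ i, ((Nat.card (Y i) : ℝ))⁻¹ * (if w ∈ Y i then 1 else 0) =
        m * (q : ℝ)⁻¹ + (1 - (q : ℝ)⁻¹) * (univ.val.map Y).countP (· ≤ ker φ) := by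
    rw [sum_comm]
    have hsplit (i : Fin m) : (if Y i ≤ ker φ then (1 : ℝ) else (q : ℝ)⁻¹) =
        (q : ℝ)⁻¹ + (1 - (q : ℝ)⁻¹) * (if Y i ≤ ker φ then 1 else 0) := by
      split_ifs <;> ring
    simp_rw [sum_mem_ker_inv_card_mul_indicator, hsplit, sum_add_distrib, ← mul_sum, sum_boole,
      sum_const, card_univ, Fintype.card_fin, nsmul_eq_mul, Multiset.countP_map]
    rfl
  have hq : (1 - (q : ℝ)⁻¹) ≠ 0 := by
    rw [sub_ne_zero, ne_comm, inv_ne_one]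
    exact_mod_cast Fintype.one_lt_card.ne'
  have := key V
  rw [sum_congr rfl fun w _ => h w, key U] at this
  exact_mod_cast (mul_left_cancel₀ hq (add_left_cancel this)).symm

variable {U V : Fin (Fintype.card K + 1) → Submodule K W}

theorem ne_of_not_tuplesEquiv (h : IsometrySolution U V) (hnt : ¬TuplesEquiv U V)
    (i j : Fin (q + 1)) : V i ≠ U j := by
  intro hij
  refine hnt (tuplesEquiv_of_map_eq ?_)
  have hV : V i ∈ univ.val.map V := Multiset.mem_map_of_mem _ (mem_univ_val i)
  have hU : V i ∈ univ.val.map U := hij ▸ Multiset.mem_map_of_mem _ (mem_univ_val j)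
  rw [← Multiset.cons_erase hV, ← Multiset.cons_erase hU,
    eq_of_forall_countP_le_ker_eq ((univ.val.map V).erase (V i)) ((univ.val.map U).erase (V i))
      (by rw [Multiset.card_erase_of_mem hV, Multiset.card_map, card_val, card_univ,
        Fintype.card_fin, Nat.pred_succ]) fun φ => ?_]
  have := h.countP_map_le_ker_eq φ
  rw [← Multiset.cons_erase hV, ← Multiset.cons_erase hU, Multiset.countP_cons,
    Multiset.countP_cons] at this
  omega

theorem finrank_sup_eq_finrank_add_one (h : IsometrySolution U V) {i : Fin (q + 1)}
    (hne : ∀ j, U j ≠ V i) (hmin : ∀ j, finrank K (V i) ≤ finrank K (U j)) (j : Fin (q + 1)) :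
    finrank K ↥(U j ⊔ V i) = finrank K (V i) + 1 := by
  refine Submodule.finrank_sup_eq_finrank_add_one (Fintype.card_fin _)
    (fun j hj => hne j (eq_of_le_of_finrank_le hj (hmin j))) (fun φ hφ => ?_) j
  obtain ⟨Y, hY, hYφ⟩ := Multiset.countP_pos.mp (h.countP_map_le_ker_eq φ ▸
    Multiset.countP_pos.mpr ⟨V i, Multiset.mem_map_of_mem _ (mem_univ_val i), hφ⟩)
  obtain ⟨j, -, rfl⟩ := Multiset.mem_map.mp hY
  exact ⟨j, hYφ⟩

theorem finrank_le_finrank_add_one (h : IsometrySolution U V) {i : Fin (q + 1)}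
    (hne : ∀ j, U j ≠ V i) (hmin : ∀ j, finrank K (V i) ≤ finrank K (U j)) (j : Fin (q + 1)) :
    finrank K (U j) ≤ finrank K (V i) + 1 :=
  h.finrank_sup_eq_finrank_add_one hne hmin j ▸ finrank_mono le_sup_left

end IsometrySolution

theorem nontrivial_solution_dim_ge_and_strict_inclusion_general
    (K W : Type*) [Field K] [Fintype K] [AddCommGroup W] [Module K W]
    [FiniteDimensional K W]
    (U V : Fin (Fintype.card K + 1) → Submodule K W)
    (hsol : IsometrySolution U V) (hnontriv : ¬ TuplesEquiv U V)
    (n : ℕ)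
    (hmaxV : (Finset.univ.sup fun i => Module.finrank K ↥(V i)) = n)
    (hmaxU : (Finset.univ.sup fun i => Module.finrank K ↥(U i)) = n) :
    (∀ i j, n - 1 ≤ Module.finrank K ↥(V i) ∧ n - 1 ≤ Module.finrank K ↥(U j)) ∧
    (∀ i j, Module.finrank K ↥(V i) < Module.finrank K ↥(U j) → V i < U j) := by
  have : Finite W := Module.finite_of_finite K
  have := Fintype.ofFinite W
  have hne := hsol.ne_of_not_tuplesEquiv hnontriv
  have hUn (j) : finrank K (U j) ≤ n := hmaxU ▸ le_sup (f := fun j => finrank K (U j)) (mem_univ j)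
  obtain ⟨iV, -, hiV⟩ := exists_mem_eq_sup univ univ_nonempty fun i => finrank K (V i)
  obtain ⟨jU, -, hjU⟩ := exists_mem_eq_sup univ univ_nonempty fun j => finrank K (U j)
  obtain ⟨i₀, -, hi₀⟩ := exists_min_image univ (fun i => finrank K (V i)) univ_nonempty
  obtain ⟨j₀, -, hj₀⟩ := exists_min_image univ (fun j => finrank K (U j)) univ_nonempty
  have hlow (i j) : n - 1 ≤ finrank K (V i) ∧ n - 1 ≤ finrank K (U j) := by
    have := hi₀ i (mem_univ i)
    have := hj₀ j (mem_univ j)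
    rcases le_total (finrank K (V i₀)) (finrank K (U j₀)) with h | h
    · have := hsol.finrank_le_finrank_add_one (fun j => (hne i₀ j).symm)
        (fun j => h.trans (hj₀ j (mem_univ j))) jU
      omega
    · have := hsol.symm.finrank_le_finrank_add_one (hne · j₀)
        (fun i => h.trans (hi₀ i (mem_univ i))) iV
      omega
  refine ⟨hlow, fun i j hij => ?_⟩
  have hmin (k) : finrank K (V i) ≤ finrank K (U k) := by
    have := hlow i k; have := hUn j; omega
  have hsup := hsol.finrank_sup_eq_finrank_add_one (fun k => (hne i k).symm) hmin j
  have hUj : U j = U j ⊔ V i := eq_of_le_of_finrank_le le_sup_left (by omega)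
  exact (hUj ▸ le_sup_right : V i ≤ U j).lt_of_ne fun h => hij.ne (by rw [h])

/-- In a nontrivial minimal solution with equal maximal dimensions `n > 1`:
(a) all the spaces have dimension at least `n - 1`, and
(b) if `dim (U j) > dim (V i)` then `V i` is strictly contained in `U j`. -/
theorem nontrivial_solution_dim_ge_and_strict_inclusion
    (K W : Type*) [Field K] [Fintype K] [AddCommGroup W] [Module K W]
    [FiniteDimensional K W]
    (U V : Fin (Fintype.card K + 1) → Submodule K W)
    (hsol : IsometrySolution U V) (hnontriv : ¬ TuplesEquiv U V)
    (n : ℕ) (hn : 1 < n)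
    (hmaxV : (Finset.univ.sup fun i => Module.finrank K ↥(V i)) = n)
    (hmaxU : (Finset.univ.sup fun i => Module.finrank K ↥(U i)) = n) :
    (∀ i j, n - 1 ≤ Module.finrank K ↥(V i) ∧ n - 1 ≤ Module.finrank K ↥(U j)) ∧
    (∀ i j, Module.finrank K ↥(V i) < Module.finrank K ↥(U j) → V i < U j) :=
  nontrivial_solution_dim_ge_and_strict_inclusion_general K W U V hsol hnontriv n hmaxV hmaxU
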